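/- Let G be a finite simple graph, let H be a set of vertices of G, let c be a (3,0,0)-coloring of the induced subgraph G−H, and let v ∈ H have exactly two neighbors u and w in G−H, where u has degree at most 5 in G and w is nicely colored. Then there is a (3,0,0)-coloring of the induced subgraph G−(H∖{v}) that agrees with c except possibly at u, in which v is colored 1 and nicely colored. -/

import Mathlib

/-- A coloring `f` (with colors `0,1,2` standing for `1,2,3`) of the subgraph of `G`
induced on the set `s` is a partial coloring with deficiency vector `d` if every
vertex of `s` colored `i` has at most `d i` neighbors in `s` of the same color.
With `d = ![3,0,0]` this is a `(3,0,0)`-coloring of the induced subgraph `G[s]`. -/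
def IsPartialCol {V : Type*} (G : SimpleGraph V) (s : Set V) (d : Fin 3 → ℕ)
    (f : V → Fin 3) : Prop :=
  ∀ v ∈ s, {u | u ∈ s ∧ G.Adj v u ∧ f u = f v}.ncard ≤ d (f v)

/-- In a partial `(3,0,0)`-coloring on `s`, a vertex `w` is nicely colored if it is
colored `1` (here color `0`) and has at most two neighbors colored `1`, or it is
colored `2` or `3` and has no neighbor of its own color. -/
def NicelyCol {V : Type*} (G : SimpleGraph V) (s : Set V) (f : V → Fin 3)
    (w : V) : Prop :=
  (f w = 0 ∧ {u | u ∈ s ∧ G.Adj w u ∧ f u = 0}.ncard ≤ 2) ∨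
  (f w ≠ 0 ∧ ∀ u ∈ s, G.Adj w u → f u ≠ f w)

/-!
If `u` is not nicely colored, it is colored `1` with three neighbors colored `1`; as
`v` is a fourth neighbor outside `G − H` and `deg u ≤ 5`, at most one neighbor of `u`
carries color `2` or `3`, so `u` can be recolored with the other one. Such a recoloring
keeps the coloring valid and keeps nicely colored vertices nicely colored. Once `u` and
`w` are nicely colored, `v` can be added with color `1`: each of them gains at most
one neighbor colored `1`, and `v` has only the two neighbors `u` and `w`.
-/

open Function

section

variable {V : Type*} {G : SimpleGraph V} {s : Set V} {c : V → Fin 3} {u v : V} {i : Fin 3}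

theorem ncard_adj_add_one_le_degree [Fintype V] [DecidableRel G.Adj] (hv : v ∉ s)
    (huv : G.Adj u v) : {y | y ∈ s ∧ G.Adj u y}.ncard + 1 ≤ G.degree u := by
  have hsub : insert v {y | y ∈ s ∧ G.Adj u y} ⊆ G.neighborSet u := by
    rintro y (rfl | ⟨-, hy⟩)
    exacts [huv, hy]
  calc {y | y ∈ s ∧ G.Adj u y}.ncard + 1
      = (insert v {y | y ∈ s ∧ G.Adj u y}).ncard :=
        (Set.ncard_insert_of_notMem fun h => hv h.1).symm
    _ ≤ (G.neighborSet u).ncard := Set.ncard_le_ncard hsub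
    _ = G.degree u := by
        rw [← Nat.card_coe_set_eq, Nat.card_eq_fintype_card,
          SimpleGraph.card_neighborSet_eq_degree]

theorem exists_ne_zero_forall_adj_ne [Finite V] (hdeg : {y | y ∈ s ∧ G.Adj u y}.ncard ≤ 4)
    (hZ : 2 < {y | y ∈ s ∧ G.Adj u y ∧ c y = 0}.ncard) :
    ∃ i ≠ 0, ∀ y ∈ s, G.Adj u y → c y ≠ i := by
  by_contra! h
  obtain ⟨y₁, hy₁, hadj₁, hc₁⟩ := h 1 (by decide)
  obtain ⟨y₂, hy₂, hadj₂, hc₂⟩ := h 2 (by decide)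
  set Z := {y | y ∈ s ∧ G.Adj u y ∧ c y = 0}
  have hsub : insert y₁ (insert y₂ Z) ⊆ {y | y ∈ s ∧ G.Adj u y} := by
    rintro y (rfl | rfl | ⟨hy, hadj, -⟩)
    exacts [⟨hy₁, hadj₁⟩, ⟨hy₂, hadj₂⟩, ⟨hy, hadj⟩]
  have hy₂Z : y₂ ∉ Z := fun h => absurd (hc₂.symm.trans h.2.2) (by decide)
  have hy₁Z : y₁ ∉ insert y₂ Z := by
    rintro (rfl | h)
    · exact absurd (hc₁.symm.trans hc₂) (by decide)
    · exact absurd (hc₁.symm.trans h.2.2) (by decide)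
  have := Set.ncard_le_ncard hsub
  rw [Set.ncard_insert_of_notMem hy₁Z, Set.ncard_insert_of_notMem hy₂Z] at this
  omega

theorem IsPartialCol.nicelyCol_of_ne_zero [Finite V] (hc : IsPartialCol G s ![3, 0, 0] c)
    (hu : u ∈ s) (hcu : c u ≠ 0) : NicelyCol G s c u := by
  have hd : (![3, 0, 0] : Fin 3 → ℕ) (c u) = 0 := by
    generalize c u = k at hcu
    fin_cases k <;> simp_all
  have hempty : {y | y ∈ s ∧ G.Adj u y ∧ c y = c u}.ncard = 0 := Nat.le_zero.mp (hd ▸ hc u hu)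
  rw [Set.ncard_eq_zero] at hempty
  exact Or.inr ⟨hcu, fun y hy hadj hcy =>
    (Set.eq_empty_iff_forall_notMem.mp hempty) y ⟨hy, hadj, hcy⟩⟩

section Update

variable [DecidableEq V]

theorem IsPartialCol.update_of_forall_adj_ne [Finite V] {d : Fin 3 → ℕ}
    (hc : IsPartialCol G s d c) (hi : ∀ y ∈ s, G.Adj u y → c y ≠ i) :
    IsPartialCol G s d (update c u i) := by
  intro x hx
  rcases eq_or_ne x u with rfl | hxu
  · have hempty : {y | y ∈ s ∧ G.Adj x y ∧ update c x i y = update c x i x} = ∅ := by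
      refine Set.eq_empty_iff_forall_notMem.mpr fun y ⟨hy, hadj, hcy⟩ => hi y hy hadj ?_
      rwa [update_self, update_of_ne (G.ne_of_adj hadj).symm] at hcy
    rw [hempty, Set.ncard_empty]
    exact Nat.zero_le _
  · rw [update_of_ne hxu]
    refine le_trans (Set.ncard_le_ncard ?_) (hc x hx)
    rintro y ⟨hy, hadj, hcy⟩
    refine ⟨hy, hadj, ?_⟩
    rcases eq_or_ne y u with rfl | hyu
    · exact absurd (by rwa [update_self] at hcy) (hi x hx hadj.symm).symm
    · rwa [update_of_ne hyu] at hcy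

theorem nicelyCol_update_self (hi0 : i ≠ 0) (hi : ∀ y ∈ s, G.Adj u y → c y ≠ i) :
    NicelyCol G s (update c u i) u := by
  refine Or.inr ⟨by rwa [update_self], fun y hy hadj => ?_⟩
  rw [update_self, update_of_ne (G.ne_of_adj hadj).symm]
  exact hi y hy hadj

theorem NicelyCol.update_of_forall_adj_ne [Finite V] {x : V} (hx : x ∈ s) (hxu : x ≠ u)
    (hi : ∀ y ∈ s, G.Adj u y → c y ≠ i) (hxn : NicelyCol G s c x) :
    NicelyCol G s (update c u i) x := by
  have hsame : ∀ y ∈ s, G.Adj x y → update c u i y = c x → c y = c x := by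
    intro y hy hadj hcy
    rcases eq_or_ne y u with rfl | hyu
    · exact absurd (by rwa [update_self] at hcy) (hi x hx hadj.symm).symm
    · rwa [update_of_ne hyu] at hcy
  rw [NicelyCol, update_of_ne hxu]
  rcases hxn with ⟨hx0, hcard⟩ | ⟨hx0, hne⟩
  · refine Or.inl ⟨hx0, le_trans (Set.ncard_le_ncard ?_) hcard⟩
    rintro y ⟨hy, hadj, hcy⟩
    exact ⟨hy, hadj, hx0 ▸ hsame y hy hadj (hx0 ▸ hcy)⟩
  · exact Or.inr ⟨hx0, fun y hy hadj hcy => hne y hy hadj (hsame y hy hadj hcy)⟩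

theorem IsPartialCol.exists_update_nicelyCol [Finite V] (hc : IsPartialCol G s ![3, 0, 0] c)
    (hu : u ∈ s) (hdeg : {y | y ∈ s ∧ G.Adj u y}.ncard ≤ 4) :
    ∃ i, IsPartialCol G s ![3, 0, 0] (update c u i) ∧ NicelyCol G s (update c u i) u ∧
      ∀ x ∈ s, NicelyCol G s c x → NicelyCol G s (update c u i) x := by
  by_cases hnice : NicelyCol G s c u
  · refine ⟨c u, ?_⟩
    rw [update_eq_self]
    exact ⟨hc, hnice, fun _ _ h => h⟩
  have hu0 : c u = 0 := by_contra fun h => hnice (hc.nicelyCol_of_ne_zero hu h)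
  have hZ : 2 < {y | y ∈ s ∧ G.Adj u y ∧ c y = 0}.ncard := by
    by_contra h
    exact hnice (Or.inl ⟨hu0, by omega⟩)
  obtain ⟨i, hi0, hi⟩ := exists_ne_zero_forall_adj_ne hdeg hZ
  refine ⟨i, hc.update_of_forall_adj_ne hi, nicelyCol_update_self hi0 hi, fun x hx hxn => ?_⟩
  rcases eq_or_ne x u with rfl | hxu
  · exact nicelyCol_update_self hi0 hi
  · exact hxn.update_of_forall_adj_ne hx hxu hi

section Extend

variable [Finite V]

theorem ncard_adj_update_zero_le :
    {y | y ∈ s ∪ {v} ∧ G.Adj v y ∧ update c v 0 y = 0}.ncard ≤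
      {x | x ∈ s ∧ G.Adj v x}.ncard := by
  refine Set.ncard_le_ncard ?_
  rintro y ⟨hy | rfl, hadj, -⟩
  exacts [⟨hy, hadj⟩, (G.irrefl hadj).elim]

theorem nicelyCol_union_singleton_update_zero (hdeg : {x | x ∈ s ∧ G.Adj v x}.ncard ≤ 2) :
    NicelyCol G (s ∪ {v}) (update c v 0) v :=
  Or.inl ⟨update_self _ _ _, ncard_adj_update_zero_le.trans hdeg⟩

theorem IsPartialCol.union_singleton_update_zero (hc : IsPartialCol G s ![3, 0, 0] c)
    (hv : v ∉ s) (hnice : ∀ x ∈ s, G.Adj v x → NicelyCol G s c x)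
    (hdeg : {x | x ∈ s ∧ G.Adj v x}.ncard ≤ 2) :
    IsPartialCol G (s ∪ {v}) ![3, 0, 0] (update c v 0) := by
  rintro x (hx | rfl)
  · have hxv : x ≠ v := ne_of_mem_of_not_mem hx hv
    set S := {y | y ∈ s ∧ G.Adj x y ∧ c y = c x}
    set S' := {y | y ∈ s ∪ {v} ∧ G.Adj x y ∧ update c v 0 y = update c v 0 x}
    have hsub : S' ⊆ insert v S := by
      rintro y ⟨hy | rfl, hadj, hcy⟩
      · have hyv : y ≠ v := ne_of_mem_of_not_mem hy hv
        rw [update_of_ne hyv, update_of_ne hxv] at hcy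
        exact Or.inr ⟨hy, hadj, hcy⟩
      · exact Or.inl rfl
    rw [update_of_ne hxv]
    by_cases hvS' : v ∈ S'
    · obtain ⟨-, hadj, hcv⟩ := hvS'
      rw [update_self, update_of_ne hxv] at hcv
      rcases hnice x hx hadj.symm with ⟨-, hcard⟩ | ⟨hx0, -⟩
      · have hS : S.ncard ≤ 2 := by simpa only [S, ← hcv] using hcard
        calc S'.ncard ≤ (insert v S).ncard := Set.ncard_le_ncard hsub
          _ ≤ S.ncard + 1 := Set.ncard_insert_le v S
          _ ≤ ![3, 0, 0] (c x) := by rw [← hcv]; simp only [Matrix.cons_val_zero]; omega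
      · exact absurd hcv.symm hx0
    · exact (Set.ncard_le_ncard ((Set.subset_insert_iff_of_notMem hvS').mp hsub)).trans
        (hc x hx)
  · rw [update_self]
    exact ncard_adj_update_zero_le.trans (hdeg.trans (by decide))

end Extend

end Update

end

theorem stmt13_general {V : Type*} [Fintype V] (G : SimpleGraph V) [DecidableRel G.Adj]
    (H : Set V) (c : V → Fin 3) (hc : IsPartialCol G Hᶜ ![3, 0, 0] c)
    (v : V) (hv : v ∈ H) (u w : V)
    (hN : {x | x ∈ Hᶜ ∧ G.Adj v x} = {u, w})
    (hdu : G.degree u ≤ 5) (hwn : NicelyCol G Hᶜ c w) :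
    ∃ c' : V → Fin 3,
      IsPartialCol G (Hᶜ ∪ {v}) ![3, 0, 0] c' ∧
      (∀ x ∈ Hᶜ, x ≠ u → c' x = c x) ∧
      c' v = 0 ∧ NicelyCol G (Hᶜ ∪ {v}) c' v := by
  classical
  have hvN : ∀ x, x ∈ Hᶜ ∧ G.Adj v x ↔ x = u ∨ x = w := fun x => by
    simpa using Set.ext_iff.mp hN x
  obtain ⟨hu, hvu⟩ := (hvN u).mpr (Or.inl rfl)
  obtain ⟨hw, -⟩ := (hvN w).mpr (Or.inr rfl)
  have hvH : v ∉ Hᶜ := fun h => h hv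
  have hdegv : {x | x ∈ Hᶜ ∧ G.Adj v x}.ncard ≤ 2 := by
    rw [hN]
    exact (Set.ncard_insert_le u {w}).trans (by simp)
  obtain ⟨i, hci, hui, hpres⟩ := hc.exists_update_nicelyCol hu
    (by have := ncard_adj_add_one_le_degree hvH hvu.symm; omega)
  have hnice : ∀ x ∈ Hᶜ, G.Adj v x → NicelyCol G Hᶜ (update c u i) x := by
    intro x hx hvx
    rcases (hvN x).mp ⟨hx, hvx⟩ with rfl | rfl
    exacts [hui, hpres x hx hwn]
  refine ⟨update (update c u i) v 0, hci.union_singleton_update_zero hvH hnice hdegv,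
    fun x hx hxu => ?_, update_self _ _ _, nicelyCol_union_singleton_update_zero hdegv⟩
  rw [update_of_ne (ne_of_mem_of_not_mem hx hvH), update_of_ne hxu]

/-- Let `H` be a set of vertices of a finite simple graph `G`, let `c` be a
`(3,0,0)`-coloring of `G − H`, and let `v ∈ H` have exactly two neighbors `u` and `w`
in `G − H`, where `u` has degree at most 5 in `G` and `w` is nicely colored.  Then
there is a `(3,0,0)`-coloring of `G − (H \ {v})` agreeing with `c` except possibly at
`u`, in which `v` is colored `1` and nicely colored. -/
theorem stmt13 {V : Type*} [Fintype V] (G : SimpleGraph V) [DecidableRel G.Adj]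
    (H : Set V) (c : V → Fin 3) (hc : IsPartialCol G Hᶜ ![3, 0, 0] c)
    (v : V) (hv : v ∈ H) (u w : V) (hu : u ∈ Hᶜ) (hw : w ∈ Hᶜ) (huw : u ≠ w)
    (hN : {x | x ∈ Hᶜ ∧ G.Adj v x} = {u, w})
    (hdu : G.degree u ≤ 5) (hwn : NicelyCol G Hᶜ c w) :
    ∃ c' : V → Fin 3,
      IsPartialCol G (Hᶜ ∪ {v}) ![3, 0, 0] c' ∧
      (∀ x ∈ Hᶜ, x ≠ u → c' x = c x) ∧
      c' v = 0 ∧ NicelyCol G (Hᶜ ∪ {v}) c' v :=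
  stmt13_general G H c hc v hv u w hN hdu hwn
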